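/- If f is integrable with weight x^γ on balls, then for almost every R > 0, ∫_{S₁⁺(n)} f(Rx) x^γ dS(x) = R^{1-n-|γ|} · d/dR ∫_{B_R⁺(n)} f(x) x^γ dx. -/

import Mathlib

/-!
Polar coordinates `x = t • y` turn the weighted integral over `B_r⁺(n)` into
`∫₀ʳ t^(n-1) t^|γ| Φ(t) dt`, where `Φ(t) = ∫_{S₁⁺} f(t y) y^γ dS(y)` is `sphPosIntegral γ f t`:
the weight `x^γ` is homogeneous of degree `|γ|`, and `t • y ∈ B_r⁺(n)` iff `t ≤ r` and
`y ∈ S₁⁺(n)`. The Lebesgue differentiation theorem then identifies the derivative of this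
integral in `r` with the integrand at almost every `R > 0`.
-/

open MeasureTheory Real Set Metric

noncomputable section

/-- The part of the unit sphere in the open positive orthant. -/
def sphPos (n : ℕ) : Set (sphere (0 : EuclideanSpace ℝ (Fin n)) 1) :=
  {x | ∀ i, 0 < (x : EuclideanSpace ℝ (Fin n)) i}

/-- Surface measure on the unit sphere of `ℝⁿ`. -/
def sphMeasure (n : ℕ) : Measure (sphere (0 : EuclideanSpace ℝ (Fin n)) 1) :=
  (volume : Measure (EuclideanSpace ℝ (Fin n))).toSphere

/-- The part `B_R⁺(n)` of the closed ball of radius `R` in the open positive orthant. -/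
def ballPos (n : ℕ) (R : ℝ) : Set (EuclideanSpace ℝ (Fin n)) :=
  {x | ‖x‖ ≤ R ∧ ∀ i, 0 < x i}

open Module Measure

section VolumeIoiPow

variable {F : Type*} [NormedAddCommGroup F] [NormedSpace ℝ F]

theorem integrable_volumeIoiPow_iff {n : ℕ} {g : ℝ → F} :
    Integrable (fun t : Ioi (0 : ℝ) => g t) (volumeIoiPow n) ↔
      IntegrableOn (fun t => t ^ n • g t) (Ioi 0) := by
  rw [volumeIoiPow, integrable_withDensity_iff_integrable_smul',
    integrableOn_iff_comap_subtypeVal measurableSet_Ioi]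
  · refine integrable_congr (.of_forall fun t => ?_)
    simp [ENNReal.toReal_ofReal (pow_nonneg t.2.out.le n)]
  · fun_prop
  · simp

theorem integral_volumeIoiPow (n : ℕ) (g : ℝ → F) :
    ∫ t : Ioi (0 : ℝ), g t ∂volumeIoiPow n = ∫ t in Ioi 0, t ^ n • g t := by
  rw [volumeIoiPow, integral_withDensity_eq_integral_toReal_smul,
    integral_subtype_comap measurableSet_Ioi fun t => (ENNReal.ofReal (t ^ n)).toReal • g t]
  · refine setIntegral_congr_fun measurableSet_Ioi fun t ht => ?_
    simp [ENNReal.toReal_ofReal (pow_nonneg (le_of_lt ht) n)]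
  · fun_prop
  · simp

end VolumeIoiPow

section PolarCoordinates

variable {E F : Type*} [NormedAddCommGroup E] [NormedSpace ℝ E] [FiniteDimensional ℝ E]
  [MeasurableSpace E] [BorelSpace E] [NormedAddCommGroup F]
  (μ : Measure E) [μ.IsAddHaarMeasure]

theorem measurePreserving_homeomorphUnitSphereProd_symm :
    MeasurePreserving (homeomorphUnitSphereProd E).symm
      (μ.toSphere.prod (volumeIoiPow (finrank ℝ E - 1))) (μ.comap (↑)) :=
  μ.measurePreserving_homeomorphUnitSphereProd.symm (homeomorphUnitSphereProd E).toMeasurableEquiv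

variable [Nontrivial E]

theorem integrable_comp_smul_toSphere_prod_iff {q : E → F} :
    Integrable (fun p : sphere (0 : E) 1 × Ioi (0 : ℝ) => q (p.2.1 • p.1.1))
      (μ.toSphere.prod (volumeIoiPow (finrank ℝ E - 1))) ↔ Integrable q μ := by
  refine ((measurePreserving_homeomorphUnitSphereProd_symm μ).integrable_comp_emb
    (Homeomorph.measurableEmbedding _) (g := q ∘ (↑))).trans ?_
  rw [← integrableOn_iff_comap_subtypeVal (f := q) (measurableSet_singleton 0).compl,
    IntegrableOn, restrict_compl_singleton]

variable [NormedSpace ℝ F]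

theorem integral_eq_integral_comp_smul_toSphere_prod (q : E → F) :
    ∫ x, q x ∂μ = ∫ p : sphere (0 : E) 1 × Ioi (0 : ℝ), q (p.2.1 • p.1.1)
      ∂(μ.toSphere.prod (volumeIoiPow (finrank ℝ E - 1))) := by
  refine .trans ?_ ((measurePreserving_homeomorphUnitSphereProd_symm μ).integral_comp
    (Homeomorph.measurableEmbedding _) (q ∘ (↑))).symm
  rw [Function.comp_def, integral_subtype_comap (measurableSet_singleton 0).compl,
    restrict_compl_singleton]

variable {μ} {q : E → F}

theorem Integrable.integrableOn_Ioi_pow_smul_integral_toSphere (hq : Integrable q μ) :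
    IntegrableOn (fun t : ℝ => t ^ (finrank ℝ E - 1) • ∫ y, q (t • (y : E)) ∂μ.toSphere)
      (Ioi 0) :=
  integrable_volumeIoiPow_iff.1
    ((integrable_comp_smul_toSphere_prod_iff μ).2 hq).integral_prod_right

theorem integral_eq_integral_Ioi_pow_smul_integral_toSphere (hq : Integrable q μ) :
    ∫ x, q x ∂μ =
      ∫ t in Ioi (0 : ℝ), t ^ (finrank ℝ E - 1) • ∫ y, q (t • (y : E)) ∂μ.toSphere := by
  rw [integral_eq_integral_comp_smul_toSphere_prod, integral_prod_symm _
    ((integrable_comp_smul_toSphere_prod_iff μ).2 hq)]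
  exact integral_volumeIoiPow _ (fun t => ∫ y, q (t • (y : E)) ∂μ.toSphere)

end PolarCoordinates

theorem prod_smul_apply_rpow {ι : Type*} [Fintype ι] {t : ℝ} (ht : 0 < t)
    {y : EuclideanSpace ℝ ι} (hy : ∀ i, 0 ≤ y i) (γ : ι → ℝ) :
    ∏ i, (t • y) i ^ γ i = t ^ (∑ i, γ i) * ∏ i, y i ^ γ i := by
  simp only [PiLp.smul_apply, smul_eq_mul, Real.mul_rpow ht.le (hy _), Finset.prod_mul_distrib,
    Real.rpow_sum_of_pos ht]

section PositiveOrthant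

variable {n : ℕ}

theorem measurableSet_ballPos (r : ℝ) : MeasurableSet (ballPos n r) := by
  unfold ballPos
  measurability

theorem measurableSet_sphPos : MeasurableSet (sphPos n) := by
  unfold sphPos
  measurability

theorem smul_mem_ballPos_iff {t r : ℝ} (ht : 0 < t)
    (y : sphere (0 : EuclideanSpace ℝ (Fin n)) 1) :
    t • (y : EuclideanSpace ℝ (Fin n)) ∈ ballPos n r ↔ t ≤ r ∧ y ∈ sphPos n := by
  simp [ballPos, sphPos, norm_smul, abs_of_pos ht, mul_pos_iff_of_pos_left ht]

variable (γ : Fin n → ℝ) (f : EuclideanSpace ℝ (Fin n) → ℝ)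

def sphPosIntegral (t : ℝ) : ℝ :=
  ∫ y in sphPos n, f (t • (y : EuclideanSpace ℝ (Fin n))) *
    ∏ i, ((y : EuclideanSpace ℝ (Fin n)) i) ^ γ i ∂sphMeasure n

theorem integral_indicator_ballPos_smul {r t : ℝ} (ht : 0 < t) :
    ∫ y, (ballPos n r).indicator (fun x => f x * ∏ i, x i ^ γ i)
        (t • (y : EuclideanSpace ℝ (Fin n))) ∂sphMeasure n =
      (Iic r).indicator (fun s => s ^ (∑ i, γ i) * sphPosIntegral γ f s) t := by
  by_cases htr : t ≤ r
  · have slice : ∀ y : sphere (0 : EuclideanSpace ℝ (Fin n)) 1,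
        (ballPos n r).indicator (fun x => f x * ∏ i, x i ^ γ i)
            (t • (y : EuclideanSpace ℝ (Fin n))) =
          (sphPos n).indicator (fun y => t ^ (∑ i, γ i) *
            (f (t • (y : EuclideanSpace ℝ (Fin n))) *
              ∏ i, ((y : EuclideanSpace ℝ (Fin n)) i) ^ γ i)) y := by
      intro y
      by_cases hy : y ∈ sphPos n
      · rw [indicator_of_mem ((smul_mem_ballPos_iff ht y).2 ⟨htr, hy⟩), indicator_of_mem hy,
          prod_smul_apply_rpow ht fun i => (hy i).le]
        ring
      · rw [indicator_of_notMem fun h => hy ((smul_mem_ballPos_iff ht y).1 h).2,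
          indicator_of_notMem hy]
    rw [integral_congr_ae (.of_forall slice), integral_indicator measurableSet_sphPos,
      integral_const_mul, indicator_of_mem (mem_Iic.2 htr)]
    rfl
  · rw [indicator_of_notMem (mt mem_Iic.1 htr)]
    simp [indicator_of_notMem fun h => htr ((smul_mem_ballPos_iff ht _).1 h).1]

theorem pow_smul_integral_indicator_ballPos_smul_eqOn (r : ℝ) :
    EqOn (fun t : ℝ => t ^ (n - 1) • ∫ y,
        (ballPos n r).indicator (fun x => f x * ∏ i, x i ^ γ i)
          (t • (y : EuclideanSpace ℝ (Fin n))) ∂sphMeasure n)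
      ((Ioc 0 r).indicator fun t => t ^ (n - 1) * (t ^ (∑ i, γ i) * sphPosIntegral γ f t))
      (Ioi 0) := by
  intro t (ht : 0 < t)
  dsimp only
  rw [integral_indicator_ballPos_smul γ f ht, smul_eq_mul]
  by_cases htr : t ≤ r
  · rw [indicator_of_mem (mem_Iic.2 htr), indicator_of_mem (show t ∈ Ioc 0 r from ⟨ht, htr⟩)]
  · rw [indicator_of_notMem (mt mem_Iic.1 htr), indicator_of_notMem fun h => htr h.2, mul_zero]

variable {γ f}

theorem integrableOn_Ioc_of_integrableOn_ballPos (hn : 1 ≤ n) {r : ℝ}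
    (hf : IntegrableOn (fun x => f x * ∏ i, x i ^ γ i) (ballPos n r)) :
    IntegrableOn (fun t => t ^ (n - 1) * (t ^ (∑ i, γ i) * sphPosIntegral γ f t))
      (Ioc 0 r) := by
  have : Nonempty (Fin n) := ⟨⟨0, hn⟩⟩
  have polar := Integrable.integrableOn_Ioi_pow_smul_integral_toSphere
    ((integrable_indicator_iff (measurableSet_ballPos r)).2 hf)
  rw [finrank_euclideanSpace_fin] at polar
  have := polar.congr_fun (pow_smul_integral_indicator_ballPos_smul_eqOn γ f r) measurableSet_Ioi
  rwa [integrableOn_indicator_iff measurableSet_Ioc, inter_eq_left.2 Ioc_subset_Ioi_self] at this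

theorem integral_ballPos_eq_integral_Ioc (hn : 1 ≤ n) {r : ℝ}
    (hf : IntegrableOn (fun x => f x * ∏ i, x i ^ γ i) (ballPos n r)) :
    ∫ x in ballPos n r, f x * ∏ i, x i ^ γ i =
      ∫ t in Ioc 0 r, t ^ (n - 1) * (t ^ (∑ i, γ i) * sphPosIntegral γ f t) := by
  have : Nonempty (Fin n) := ⟨⟨0, hn⟩⟩
  rw [← integral_indicator (measurableSet_ballPos r),
    integral_eq_integral_Ioi_pow_smul_integral_toSphere
      ((integrable_indicator_iff (measurableSet_ballPos r)).2 hf), finrank_euclideanSpace_fin,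
    ← inter_eq_right.2 (Ioc_subset_Ioi_self : Ioc 0 r ⊆ Ioi (0 : ℝ)),
    ← setIntegral_indicator measurableSet_Ioc]
  exact setIntegral_congr_fun measurableSet_Ioi
    (pow_smul_integral_indicator_ballPos_smul_eqOn γ f r)

end PositiveOrthant

theorem locallyIntegrable_indicator_Ioi {F : Type*} [NormedAddCommGroup F] {ρ : ℝ → F}
    (hρ : ∀ r > 0, IntegrableOn ρ (Ioc 0 r)) : LocallyIntegrable ((Ioi 0).indicator ρ) := by
  intro x
  have hc : 0 < max x 0 + 1 := by positivity
  refine ⟨Iio (max x 0 + 1), Iio_mem_nhds (by linarith [le_max_left x 0]), ?_⟩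
  rw [integrableOn_indicator_iff measurableSet_Ioi]
  exact (hρ _ hc).mono_set fun t ht => ⟨ht.1, le_of_lt ht.2⟩

open Filter Topology in
theorem sphere_integral_eq_deriv_ball_integral_general (n : ℕ) (hn : 1 ≤ n) (γ : Fin n → ℝ)
    (f : EuclideanSpace ℝ (Fin n) → ℝ)
    (hf : ∀ R > 0, IntegrableOn (fun x => f x * ∏ i, (x i) ^ (γ i)) (ballPos n R)) :
    ∀ᵐ R ∂(volume.restrict (Ioi (0:ℝ))),
      (∫ x in sphPos n,
          f (R • (x : EuclideanSpace ℝ (Fin n))) *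
            ∏ i, ((x : EuclideanSpace ℝ (Fin n)) i) ^ (γ i) ∂(sphMeasure n)) =
        R ^ ((1 : ℝ) - n - ∑ i, γ i) *
          deriv (fun r => ∫ x in ballPos n r, f x * ∏ i, (x i) ^ (γ i)) R := by
  set ρ : ℝ → ℝ := fun t => t ^ (n - 1) * (t ^ (∑ i, γ i) * sphPosIntegral γ f t)
  have hρ : ∀ r > 0, IntegrableOn ρ (Ioc 0 r) := fun r hr =>
    integrableOn_Ioc_of_integrableOn_ballPos hn (hf r hr)
  filter_upwards [ae_restrict_of_ae
      (LocallyIntegrable.ae_hasDerivAt_integral (locallyIntegrable_indicator_Ioi hρ)),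
    ae_restrict_mem measurableSet_Ioi] with R hR (hR0 : 0 < R)
  have ball_eq : (fun r => ∫ x in ballPos n r, f x * ∏ i, x i ^ γ i) =ᶠ[𝓝 R]
      fun r => ∫ t in 0..r, (Ioi 0).indicator ρ t := by
    filter_upwards [Ioi_mem_nhds hR0] with r (hr : 0 < r)
    rw [integral_ballPos_eq_integral_Ioc hn (hf r hr), intervalIntegral.integral_of_le hr.le,
      setIntegral_indicator measurableSet_Ioi, inter_eq_left.2 Ioc_subset_Ioi_self]
  have hpow : R ^ ((1 : ℝ) - n - ∑ i, γ i) * (R ^ (n - 1) * R ^ (∑ i, γ i)) = 1 := by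
    rw [← rpow_natCast, Nat.cast_sub hn, ← rpow_add hR0, ← rpow_add hR0]
    norm_num
  rw [((hR 0).congr_of_eventuallyEq ball_eq).deriv, indicator_of_mem (mem_Ioi.2 hR0)]
  show sphPosIntegral γ f R = _
  linear_combination -sphPosIntegral γ f R * hpow

/-- For a.e. `R > 0`:
`∫_{S₁⁺} f(Rx) x^γ dS(x) = R^{1-n-|γ|} d/dR ∫_{B_R⁺} f(x) x^γ dx`. -/
theorem sphere_integral_eq_deriv_ball_integral (n : ℕ) (hn : 1 ≤ n) (γ : Fin n → ℝ)
    (hγ : ∀ i, 0 < γ i) (f : EuclideanSpace ℝ (Fin n) → ℝ)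
    (hf : ∀ R > 0, IntegrableOn (fun x => f x * ∏ i, (x i) ^ (γ i)) (ballPos n R)) :
    ∀ᵐ R ∂(volume.restrict (Ioi (0:ℝ))),
      (∫ x in sphPos n,
          f (R • (x : EuclideanSpace ℝ (Fin n))) *
            ∏ i, ((x : EuclideanSpace ℝ (Fin n)) i) ^ (γ i) ∂(sphMeasure n)) =
        R ^ ((1 : ℝ) - n - ∑ i, γ i) *
          deriv (fun r => ∫ x in ballPos n r, f x * ∏ i, (x i) ^ (γ i)) R :=
  sphere_integral_eq_deriv_ball_integral_general n hn γ f hf
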